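/- Let P be the orthogonal projection on L²(ℝ²) given by multiplication by the indicator of the vertical strip {x : |x₁| ≤ h}. Suppose {u_n}_{n∈S} and {v_λ}_{λ∈Λ'} are families of functions in L²(ℝ²) satisfying, for some N ≥ 2 and constants a, b > 0 and C > 0: |u_n(x)| ≤ C·a·⟨|a x₁ + c_n|⟩^{−N}⟨|a x₂ + d_n|⟩^{−N} for shifts c_n, d_n. Then for any fixed v with the same decay profile |v(x)| ≤ C·a·⟨|a x₁ + c'|⟩^{−N}⟨|a x₂ + d'|⟩^{−N}, the sum over all integer shifts (c_n, d_n) ∈ (ℤ/2)² of ∫_{|x₁|≤h} ∫_ℝ |u_n(x)||v(x)| dx is bounded by C'·h·a for a constant C' depending only on C and N. -/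

import Mathlib

/-!
Every decay factor `⟨t⟩⁻ᴺ` with `N ≥ 2` is at most `L t = lorentzian t = (1 + t²)⁻¹`, and the
`x₁`-factor of `v` is at most `1`, so the integrand for the shift `m` is bounded by
`C²a² L(a x₁ + m₁/2) · L(a x₂ + m₂/2) L(a x₂ + d')`, and by Fubini its integral over the strip
splits into an `x₁`-integral over `[-h, h]` times an `x₂`-integral over `ℝ`. Sums of
half-integer translates of `L` are bounded by `4π` uniformly, so the `x₁`-integrals sum to at most
`8πh` and the `x₂`-integrals to at most `4π ∫ L(a x₂ + d') dx₂ = 4π²/a`.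
-/

open MeasureTheory Real Set

noncomputable def lorentzian (t : ℝ) : ℝ := (1 + t ^ 2)⁻¹

lemma lorentzian_nonneg (t : ℝ) : 0 ≤ lorentzian t := by unfold lorentzian; positivity

lemma lorentzian_le_one (t : ℝ) : lorentzian t ≤ 1 :=
  inv_le_one_of_one_le₀ (by nlinarith [sq_nonneg t])

lemma continuous_lorentzian : Continuous lorentzian :=
  (continuous_const.add (continuous_pow 2)).inv₀ fun t =>
    (by positivity : (0 : ℝ) < 1 + t ^ 2).ne'

lemma integrable_lorentzian : Integrable lorentzian := integrable_inv_one_add_sq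

lemma integral_lorentzian : ∫ t, lorentzian t = π := integral_univ_inv_one_add_sq

lemma rpow_neg_div_two_le_lorentzian {s : ℝ} (hs : 2 ≤ s) (t : ℝ) :
    (1 + t ^ 2) ^ (-s / 2) ≤ lorentzian t := by
  rw [lorentzian, ← rpow_neg_one]
  exact rpow_le_rpow_of_exponent_le (by nlinarith [sq_nonneg t]) (by linarith)

lemma mul_rpow_neg_div_two_mul_le {s K : ℝ} (hs : 2 ≤ s) (hK : 0 ≤ K) (t₁ t₂ : ℝ) :
    K * (1 + t₁ ^ 2) ^ (-s / 2) * (1 + t₂ ^ 2) ^ (-s / 2) ≤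
      K * lorentzian t₁ * lorentzian t₂ :=
  mul_le_mul (mul_le_mul_of_nonneg_left (rpow_neg_div_two_le_lorentzian hs t₁) hK)
    (rpow_neg_div_two_le_lorentzian hs t₂) (by positivity) (mul_nonneg hK (lorentzian_nonneg _))

lemma mul_le_mul_lorentzian_of_decay {s K p q t₁ t₂ r₁ r₂ : ℝ} (hs : 2 ≤ s) (hK : 0 ≤ K)
    (hq : 0 ≤ q) (hp : p ≤ K * (1 + t₁ ^ 2) ^ (-s / 2) * (1 + t₂ ^ 2) ^ (-s / 2))
    (hq' : q ≤ K * (1 + r₁ ^ 2) ^ (-s / 2) * (1 + r₂ ^ 2) ^ (-s / 2)) :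
    p * q ≤ (K * lorentzian t₁) * (K * (lorentzian t₂ * lorentzian r₂)) := by
  have hp' := hp.trans (mul_rpow_neg_div_two_mul_le hs hK t₁ t₂)
  have hq'' : q ≤ K * lorentzian r₂ :=
    (hq'.trans (mul_rpow_neg_div_two_mul_le hs hK r₁ r₂)).trans <|
      mul_le_mul_of_nonneg_right (mul_le_of_le_one_right hK (lorentzian_le_one r₁))
        (lorentzian_nonneg r₂)
  calc p * q ≤ (K * lorentzian t₁ * lorentzian t₂) * (K * lorentzian r₂) :=
        mul_le_mul hp' hq'' hq
          (mul_nonneg (mul_nonneg hK (lorentzian_nonneg _)) (lorentzian_nonneg _))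
    _ = _ := by ring

lemma lorentzian_le_two_mul_lorentzian {y u : ℝ} (h : |u - y| ≤ 2⁻¹) :
    lorentzian y ≤ 2 * lorentzian u := by
  have hu : (u - y) ^ 2 ≤ 4⁻¹ := by
    nlinarith [abs_nonneg (u - y), sq_abs (u - y)]
  calc lorentzian y ≤ ((1 + u ^ 2) / 2)⁻¹ :=
        inv_anti₀ (by positivity) (by nlinarith [sq_nonneg (u - 2 * y)])
    _ = 2 * lorentzian u := by rw [inv_div, div_eq_mul_inv, lorentzian]

lemma integrable_lorentzian_comp_affine {a : ℝ} (ha : a ≠ 0) (b : ℝ) :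
    Integrable fun t => lorentzian (a * t + b) :=
  (integrable_lorentzian.comp_add_right b).comp_mul_left' ha

lemma integrable_lorentzian_comp_affine_mul {a : ℝ} (ha : a ≠ 0) (b d : ℝ) :
    Integrable fun t => lorentzian (a * t + b) * lorentzian (a * t + d) :=
  (integrable_lorentzian_comp_affine ha d).bdd_mul
    (continuous_lorentzian.comp (by fun_prop)).aestronglyMeasurable
    (Filter.Eventually.of_forall fun t => by
      rw [norm_of_nonneg (lorentzian_nonneg _)]; exact lorentzian_le_one _)

lemma integral_lorentzian_comp_affine (a b : ℝ) :
    ∫ t, lorentzian (a * t + b) = |a|⁻¹ * π := by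
  rw [Measure.integral_comp_mul_left (fun y => lorentzian (y + b)), integral_add_right_eq_self,
    integral_lorentzian, abs_inv, smul_eq_mul]

/-- Each term is at most `2 / b` times the integral of `lorentzian` over the adjacent cell
`(s + k b, s + (k + 1) b]`, and these cells are disjoint. -/
lemma mul_sum_lorentzian_add_zsmul_le {b : ℝ} (hb : 0 < b) (hb' : b ≤ 2⁻¹) (s : ℝ)
    (F : Finset ℤ) : b * ∑ k ∈ F, lorentzian (s + k • b) ≤ 2 * π := by
  set J : ℤ → Set ℝ := fun k => Ioc (s + k • b) (s + (k + 1) • b)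
  have hJ : ∀ k, volume.real (J k) = b := fun k => by
    rw [Real.volume_real_Ioc_of_le (by rw [add_smul, one_smul]; linarith), add_smul, one_smul]
    ring
  have hcell : ∀ k, b * lorentzian (s + k • b) ≤ 2 * ∫ u in J k, lorentzian u := fun k => by
    have hconst : b * lorentzian (s + k • b) = ∫ _ in J k, lorentzian (s + k • b) := by
      rw [setIntegral_const, hJ, smul_eq_mul]
    rw [hconst, ← integral_const_mul]
    refine setIntegral_mono_on (integrableOn_const measure_Ioc_lt_top.ne)
      (integrable_lorentzian.integrableOn.const_mul 2) measurableSet_Ioc fun u hu => ?_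
    simp only [J, mem_Ioc, add_smul, one_smul] at hu
    exact lorentzian_le_two_mul_lorentzian (abs_le.2 ⟨by linarith [hu.1], by linarith [hu.2]⟩)
  calc b * ∑ k ∈ F, lorentzian (s + k • b)
      ≤ 2 * ∑ k ∈ F, ∫ u in J k, lorentzian u := by
        rw [Finset.mul_sum, Finset.mul_sum]; exact Finset.sum_le_sum fun k _ => hcell k
    _ = 2 * ∫ u in ⋃ k ∈ F, J k, lorentzian u := by
        rw [integral_biUnion_finset F (fun k _ => measurableSet_Ioc)
          (fun k _ l _ hkl => Set.pairwise_disjoint_Ioc_add_zsmul s b hkl)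
          fun k _ => integrable_lorentzian.integrableOn]
    _ ≤ 2 * ∫ u, lorentzian u :=
        mul_le_mul_of_nonneg_left (setIntegral_le_integral integrable_lorentzian
          (Filter.Eventually.of_forall lorentzian_nonneg)) two_pos.le
    _ = 2 * π := by rw [integral_lorentzian]

lemma sum_lorentzian_add_half_int_le (s : ℝ) (F : Finset ℤ) :
    ∑ k ∈ F, lorentzian (s + (k : ℝ) / 2) ≤ 4 * π := by
  have := mul_sum_lorentzian_add_zsmul_le (b := 2⁻¹) (by norm_num) le_rfl s F
  simp only [zsmul_eq_mul, ← div_eq_mul_inv] at this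
  linarith

lemma sum_integral_le_of_sum_le {α ι : Type*} [MeasurableSpace α] {μ : Measure α}
    {f : ι → α → ℝ} {g : α → ℝ} {c : ℝ} (F : Finset ι) (hf : ∀ k, Integrable (f k) μ)
    (hg : Integrable g μ) (hfg : ∀ x, ∑ k ∈ F, f k x ≤ c * g x) :
    ∑ k ∈ F, ∫ x, f k x ∂μ ≤ c * ∫ x, g x ∂μ := by
  rw [← integral_finsetSum F fun k _ => hf k, ← integral_const_mul]
  exact integral_mono (integrable_finsetSum F fun k _ => hf k) (hg.const_mul c) hfg

lemma sum_setIntegral_lorentzian_half_int_le {h : ℝ} (hh : 0 ≤ h) (a : ℝ) (F : Finset ℤ) :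
    ∑ k ∈ F, ∫ t in Icc (-h) h, lorentzian (a * t + (k : ℝ) / 2) ≤ 8 * π * h := by
  have hcont : ∀ b, Continuous fun t => lorentzian (a * t + b) := fun b =>
    continuous_lorentzian.comp (by fun_prop)
  calc _ ≤ 4 * π * ∫ _ in Icc (-h) h, (1 : ℝ) :=
        sum_integral_le_of_sum_le F (fun k => (hcont _).integrableOn_Icc)
          (integrable_const 1) fun t => by simpa using sum_lorentzian_add_half_int_le (a * t) F
    _ = 8 * π * h := by
        rw [setIntegral_const, Real.volume_real_Icc_of_le (by linarith), smul_eq_mul]; ring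

lemma sum_integral_lorentzian_half_int_mul_le {a : ℝ} (ha : a ≠ 0) (d : ℝ) (F : Finset ℤ) :
    ∑ k ∈ F, ∫ t, lorentzian (a * t + (k : ℝ) / 2) * lorentzian (a * t + d)
      ≤ 4 * π * (|a|⁻¹ * π) := by
  rw [← integral_lorentzian_comp_affine a d]
  refine sum_integral_le_of_sum_le F (fun k => integrable_lorentzian_comp_affine_mul ha _ d)
    (integrable_lorentzian_comp_affine ha d) fun t => ?_
  rw [← Finset.sum_mul]
  exact mul_le_mul_of_nonneg_right (sum_lorentzian_add_half_int_le _ F) (lorentzian_nonneg _)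

lemma integral_prod_le_of_le_mul {α β : Type*} [MeasurableSpace α] [MeasurableSpace β]
    {μ : Measure α} {ν : Measure β} [SFinite μ] [SFinite ν] {F : α × β → ℝ} {f : α → ℝ}
    {g : β → ℝ} (hF : ∀ x, 0 ≤ F x) (hf : Integrable f μ) (hg : Integrable g ν)
    (hFfg : ∀ x, F x ≤ f x.1 * g x.2) :
    ∫ x, F x ∂μ.prod ν ≤ (∫ x, f x ∂μ) * ∫ y, g y ∂ν := by
  rw [← integral_prod_mul]
  exact integral_mono_of_nonneg (Filter.Eventually.of_forall hF) (hf.mul_prod hg)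
    (Filter.Eventually.of_forall hFfg)

lemma volume_restrict_strip (h : ℝ) :
    (volume : Measure (ℝ × ℝ)).restrict {x | |x.1| ≤ h} =
      (volume.restrict (Icc (-h) h)).prod volume := by
  have : {x : ℝ × ℝ | |x.1| ≤ h} = Icc (-h) h ×ˢ univ := by ext x; simp [abs_le]
  rw [this, Measure.volume_eq_prod, ← Measure.prod_restrict, Measure.restrict_univ]

lemma tsum_le_mul_of_le_mul {ι κ : Type*} {I : ι × κ → ℝ} {A : ι → ℝ} {B : κ → ℝ} {α β : ℝ}
    (hI₀ : ∀ m, 0 ≤ I m) (hI : ∀ m, I m ≤ A m.1 * B m.2) (hA₀ : ∀ i, 0 ≤ A i)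
    (hB₀ : ∀ k, 0 ≤ B k) (hA : ∀ s, ∑ i ∈ s, A i ≤ α) (hB : ∀ s, ∑ k ∈ s, B k ≤ β) :
    ∑' m, I m ≤ α * β := by
  classical
  have hα : 0 ≤ α := by simpa using hA ∅
  refine Real.tsum_le_of_sum_le hI₀ fun s => ?_
  calc ∑ m ∈ s, I m ≤ ∑ m ∈ s.image Prod.fst ×ˢ s.image Prod.snd, A m.1 * B m.2 :=
        (Finset.sum_le_sum fun m _ => hI m).trans <| Finset.sum_le_sum_of_subset_of_nonneg
          Finset.subset_product fun m _ _ => mul_nonneg (hA₀ _) (hB₀ _)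
    _ = (∑ i ∈ s.image Prod.fst, A i) * ∑ k ∈ s.image Prod.snd, B k := by
        rw [Finset.sum_product, Finset.sum_mul_sum]
    _ ≤ α * β := mul_le_mul (hA _) (hB _) (Finset.sum_nonneg fun k _ => hB₀ k) hα

/-- key estimate behind the cluster coherence bound
`μ_c(Λ₂, P_j G_j; G_j) ≲ h s`.  If each `u_m` and `v` obey the Gabor-type decay
`≤ C a ⟨|a x₁ + m₁/2|⟩^{-N} ⟨|a x₂ + m₂/2|⟩^{-N}` (with shifts in `(ℤ/2)²` for
`u_m` and arbitrary shifts `c', d'` for `v`), then the sum over all shifts of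
`∫_{|x₁| ≤ h} |u_m| |v|` is bounded by `C' h a`, with `C'` depending only on `C`
and `N`. -/
theorem strip_gabor_sum_estimate (N : ℕ) (hN : 2 ≤ N) (C : ℝ) (hC : 0 < C) :
    ∃ C' : ℝ, 0 < C' ∧
      ∀ (h a : ℝ), 0 < h → 0 < a →
        ∀ (u : ℤ × ℤ → ℝ × ℝ → ℂ) (v : ℝ × ℝ → ℂ) (c' d' : ℝ),
          (∀ (m : ℤ × ℤ) (x : ℝ × ℝ),
            ‖u m x‖ ≤ C * a * (1 + (a * x.1 + (m.1 : ℝ) / 2) ^ 2) ^ (-(N : ℝ) / 2) *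
              (1 + (a * x.2 + (m.2 : ℝ) / 2) ^ 2) ^ (-(N : ℝ) / 2)) →
          (∀ x : ℝ × ℝ,
            ‖v x‖ ≤ C * a * (1 + (a * x.1 + c') ^ 2) ^ (-(N : ℝ) / 2) *
              (1 + (a * x.2 + d') ^ 2) ^ (-(N : ℝ) / 2)) →
          (∑' m : ℤ × ℤ, ∫ x in {x : ℝ × ℝ | |x.1| ≤ h}, ‖u m x‖ * ‖v x‖)
            ≤ C' * h * a := by
  refine ⟨32 * π ^ 3 * C ^ 2, by positivity, fun h a hh ha u v c' d' hu hv => ?_⟩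
  have hN' : (2 : ℝ) ≤ N := by exact_mod_cast hN
  have hCa : 0 ≤ C * a := by positivity
  set A : ℤ → ℝ := fun k => ∫ t in Icc (-h) h, C * a * lorentzian (a * t + (k : ℝ) / 2)
  set B : ℤ → ℝ := fun k =>
    ∫ t, C * a * (lorentzian (a * t + (k : ℝ) / 2) * lorentzian (a * t + d'))
  have hI : ∀ m : ℤ × ℤ, ∫ x in {x : ℝ × ℝ | |x.1| ≤ h}, ‖u m x‖ * ‖v x‖ ≤ A m.1 * B m.2 :=
    fun m => by
      rw [volume_restrict_strip]
      exact integral_prod_le_of_le_mul (fun x => by positivity)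
        ((continuous_lorentzian.comp (by fun_prop)).integrableOn_Icc.const_mul _)
        ((integrable_lorentzian_comp_affine_mul ha.ne' _ d').const_mul _) fun x =>
          mul_le_mul_lorentzian_of_decay hN' hCa (norm_nonneg _) (hu m x) (hv x)
  have hA : ∀ s, ∑ k ∈ s, A k ≤ C * a * (8 * π * h) := fun s => by
    simp only [A, integral_const_mul, ← Finset.mul_sum]
    exact mul_le_mul_of_nonneg_left (sum_setIntegral_lorentzian_half_int_le hh.le a s) hCa
  have hB : ∀ s, ∑ k ∈ s, B k ≤ C * a * (4 * π * (|a|⁻¹ * π)) := fun s => by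
    simp only [B, integral_const_mul, ← Finset.mul_sum]
    exact mul_le_mul_of_nonneg_left (sum_integral_lorentzian_half_int_mul_le ha.ne' d' s) hCa
  calc _ ≤ C * a * (8 * π * h) * (C * a * (4 * π * (|a|⁻¹ * π))) :=
        tsum_le_mul_of_le_mul (fun m => integral_nonneg fun x => by positivity) hI
          (fun k => setIntegral_nonneg measurableSet_Icc fun t _ =>
            mul_nonneg hCa (lorentzian_nonneg _))
          (fun k => integral_nonneg fun t =>
            mul_nonneg hCa (mul_nonneg (lorentzian_nonneg _) (lorentzian_nonneg _))) hA hB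
    _ = 32 * π ^ 3 * C ^ 2 * h * a := by rw [abs_of_pos ha]; field_simp; ring
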